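/- Let p₁, p₂ ∈ (0,1) with p₁+p₂=1 and let H₁, H₂ be nonempty graphs. Then (H₁,H₂) is (p₁,p₂)-common if and only if for every kernel U with -p₁ ≤ U(x,y) ≤ p₂ pointwise, the quantity Σ_{E⊆E(H₁), |E|≥2} t(H₁[E],U)/(e(H₁)p₁^{|E|-1}) + Σ_{E⊆E(H₂), |E|≥2} (-1)^{|E|} t(H₂[E],U)/(e(H₂)p₂^{|E|-1}) is non-negative. -/

import Mathlib

/-!
Graphons `W₁, W₂` with `W₁ + W₂ = 1` are exactly `W₁ = p₁ + U`, `W₂ = p₂ - U` for kernels `U`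
with `-p₁ ≤ U ≤ p₂`. Expanding the product over the edges of `H`,
`t(H, p + cU) = ∑_{E ⊆ E(H)} p^{e(H)-|E|} c^{|E|} t(H[E], U)`; after dividing by
`e(H) p^{e(H)-1}` the empty edge set contributes `p / e(H)` and each of the `e(H)` single edges
contributes `c ∫U / e(H)`. With `c = 1` for `H₁` and `c = -1` for `H₂` the linear terms cancel,
so the commonness inequality minus `p₁/e(H₁) + p₂/e(H₂)` is exactly the expansion.
-/

open MeasureTheory Finset

/-- The uniform measure on the unit interval `[0,1]`, as a measure on `ℝ`. -/
noncomputable def unitM : Measure ℝ := volume.restrict (Set.Icc 0 1)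

instance : SigmaFinite unitM := by unfold unitM; infer_instance

/-- Value of a symmetric two-variable function on an unordered pair of vertices. -/
noncomputable def symEdge {α : Type*} (W : ℝ → ℝ → ℝ) (x : α → ℝ) : Sym2 α → ℝ :=
  Sym2.lift ⟨fun u v => (W (x u) (x v) + W (x v) (x u)) / 2, fun u v => by ring⟩

open Classical in
/-- Homomorphism density of a finite simple graph in a kernel. -/
noncomputable def homDensity {V : Type*} [Fintype V] (G : SimpleGraph V)
    (W : ℝ → ℝ → ℝ) : ℝ :=
  ∫ x : V → ℝ, ∏ e ∈ G.edgeFinset, symEdge W x e ∂(Measure.pi fun _ => unitM)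

/-- Number of edges of a graph. -/
noncomputable def eCount {V : Type*} (G : SimpleGraph V) : ℕ := G.edgeSet.ncard

def IsSymm2 (W : ℝ → ℝ → ℝ) : Prop := ∀ x y, W x y = W y x

/-- A kernel: bounded, symmetric, measurable. -/
def IsKernel (W : ℝ → ℝ → ℝ) : Prop :=
  Measurable (Function.uncurry W) ∧ IsSymm2 W ∧ ∃ C, ∀ x y, |W x y| ≤ C

/-- A graphon: symmetric measurable with values in `[0,1]`. -/
def IsGraphon (W : ℝ → ℝ → ℝ) : Prop :=
  Measurable (Function.uncurry W) ∧ IsSymm2 W ∧ ∀ x y, W x y ∈ Set.Icc (0:ℝ) 1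

/-- The pair `(G₁, G₂)` is `(p₁,p₂)`-common. -/
def IsCommonPair {V₁ V₂ : Type*} [Fintype V₁] [Fintype V₂]
    (G₁ : SimpleGraph V₁) (G₂ : SimpleGraph V₂) (p₁ p₂ : ℝ) : Prop :=
  ∀ W₁ W₂ : ℝ → ℝ → ℝ, IsGraphon W₁ → IsGraphon W₂ → (∀ x y, W₁ x y + W₂ x y = 1) →
    homDensity G₁ W₁ / (eCount G₁ * p₁ ^ (eCount G₁ - 1))
      + homDensity G₂ W₂ / (eCount G₂ * p₂ ^ (eCount G₂ - 1))
      ≥ p₁ / eCount G₁ + p₂ / eCount G₂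

instance : IsProbabilityMeasure unitM :=
  ⟨by simp [unitM, Real.volume_Icc]⟩

open ProbabilityTheory in
lemma MeasureTheory.Measure.pi_map_eval_pair {ι : Type*} [Fintype ι] {α : ι → Type*}
    [∀ i, MeasurableSpace (α i)] (μ : (i : ι) → Measure (α i))
    [∀ i, IsProbabilityMeasure (μ i)] {u v : ι} (huv : u ≠ v) :
    (Measure.pi μ).map (fun x => (x u, x v)) = (μ u).prod (μ v) := by
  have hind : IndepFun (fun x : (i : ι) → α i => x u) (fun x => x v) (Measure.pi μ) :=
    (iIndepFun_pi (X := fun _ => id) fun _ => aemeasurable_id).indepFun huv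
  rw [(indepFun_iff_map_prod_eq_prod_map_map (measurable_pi_apply u).aemeasurable
      (measurable_pi_apply v).aemeasurable).1 hind,
    (measurePreserving_eval μ u).map_eq, (measurePreserving_eval μ v).map_eq]

section symEdge

variable {α : Type*} {W : ℝ → ℝ → ℝ}

lemma symEdge_mk (x : α → ℝ) (u v : α) :
    symEdge W x s(u, v) = (W (x u) (x v) + W (x v) (x u)) / 2 := rfl

lemma symEdge_of_isSymm2 (hW : IsSymm2 W) (x : α → ℝ) (u v : α) :
    symEdge W x s(u, v) = W (x u) (x v) := by
  rw [symEdge_mk, hW (x v)]; ring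

lemma symEdge_const_add (p : ℝ) (x : α → ℝ) (e : Sym2 α) :
    symEdge (fun a b => p + W a b) x e = p + symEdge W x e := by
  induction e using Sym2.ind with
  | _ u v => simp only [symEdge_mk]; ring

lemma symEdge_const_mul (c : ℝ) (x : α → ℝ) (e : Sym2 α) :
    symEdge (fun a b => c * W a b) x e = c * symEdge W x e := by
  induction e using Sym2.ind with
  | _ u v => simp only [symEdge_mk]; ring

lemma abs_symEdge_le {C : ℝ} (hC : ∀ a b, |W a b| ≤ C) (x : α → ℝ) (e : Sym2 α) :
    |symEdge W x e| ≤ C := by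
  induction e using Sym2.ind with
  | _ u v =>
    rw [symEdge_mk, abs_div, abs_two]
    linarith [abs_add_le (W (x u) (x v)) (W (x v) (x u)), hC (x u) (x v), hC (x v) (x u)]

lemma measurable_symEdge (hW : Measurable (Function.uncurry W)) (e : Sym2 α) :
    Measurable fun x : α → ℝ => symEdge W x e := by
  induction e using Sym2.ind with
  | _ u v =>
    have hpair (u v : α) : Measurable fun x : α → ℝ => W (x u) (x v) :=
      hW.comp (f := fun x : α → ℝ => (x u, x v))
        ((measurable_pi_apply u).prodMk (measurable_pi_apply v))
    exact ((hpair u v).add (hpair v u)).div_const 2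

end symEdge

noncomputable def edgeDensity {V : Type*} [Fintype V] (F : Finset (Sym2 V))
    (W : ℝ → ℝ → ℝ) : ℝ :=
  ∫ x : V → ℝ, ∏ e ∈ F, symEdge W x e ∂(Measure.pi fun _ => unitM)

section edgeDensity

variable {V : Type*} [Fintype V] {W : ℝ → ℝ → ℝ}

lemma homDensity_eq_edgeDensity (G : SimpleGraph V) [Fintype G.edgeSet] (W : ℝ → ℝ → ℝ) :
    homDensity G W = edgeDensity G.edgeFinset W := by
  simp only [homDensity, edgeDensity]
  congr!

lemma homDensity_fromEdgeSet {E : Finset (Sym2 V)} (hE : ∀ e ∈ E, ¬ e.IsDiag)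
    (W : ℝ → ℝ → ℝ) :
    homDensity (SimpleGraph.fromEdgeSet (E : Set (Sym2 V))) W = edgeDensity E W := by
  classical
  rw [homDensity_eq_edgeDensity]
  congr
  ext e
  simpa [SimpleGraph.edgeSet_fromEdgeSet] using hE e

lemma edgeDensity_empty : edgeDensity (∅ : Finset (Sym2 V)) W = 1 := by
  simp [edgeDensity]

lemma edgeDensity_const_mul (c : ℝ) (E : Finset (Sym2 V)) :
    edgeDensity E (fun a b => c * W a b) = c ^ E.card * edgeDensity E W := by
  simp only [edgeDensity, symEdge_const_mul, prod_mul_distrib, prod_const, integral_const_mul]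

lemma edgeDensity_singleton (hW : Measurable (Function.uncurry W)) (hsymm : IsSymm2 W)
    {u v : V} (huv : u ≠ v) :
    edgeDensity {s(u, v)} W = ∫ q, Function.uncurry W q ∂(unitM.prod unitM) := by
  simp only [edgeDensity, prod_singleton, symEdge_of_isSymm2 hsymm]
  have hpair : Measurable fun x : V → ℝ => (x u, x v) :=
    (measurable_pi_apply u).prodMk (measurable_pi_apply v)
  rw [← Measure.pi_map_eval_pair (fun _ => unitM) huv,
    integral_map hpair.aemeasurable hW.aestronglyMeasurable]
  rfl

lemma integrable_prod_symEdge (hW : Measurable (Function.uncurry W)) {C : ℝ}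
    (hC : ∀ a b, |W a b| ≤ C) (E : Finset (Sym2 V)) :
    Integrable (fun x : V → ℝ => ∏ e ∈ E, symEdge W x e) (Measure.pi fun _ => unitM) := by
  refine .of_bound (measurable_prod E fun e _ => measurable_symEdge hW e).aestronglyMeasurable
    (C ^ E.card) (ae_of_all _ fun x => ?_)
  rw [Real.norm_eq_abs, Finset.abs_prod, ← prod_const]
  exact prod_le_prod (fun e _ => abs_nonneg _) fun e _ => abs_symEdge_le hC x e

lemma edgeDensity_const_add (hW : Measurable (Function.uncurry W)) {C : ℝ}
    (hC : ∀ a b, |W a b| ≤ C) (p : ℝ) (F : Finset (Sym2 V)) :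
    edgeDensity F (fun a b => p + W a b)
      = ∑ E ∈ F.powerset, p ^ (F.card - E.card) * edgeDensity E W := by
  classical
  simp_rw [edgeDensity, symEdge_const_add, add_comm p, prod_add, prod_const]
  rw [integral_finsetSum _ fun E _ => (integrable_prod_symEdge hW hC E).mul_const _]
  refine Finset.sum_congr rfl fun E hE => ?_
  rw [integral_mul_const, card_sdiff_of_subset (mem_powerset.1 hE), mul_comm]

end edgeDensity

lemma Finset.sum_powerset_eq_empty_add_sum_singleton_add {ι M : Type*} [DecidableEq ι]
    [AddCommMonoid M] (F : Finset ι) (f : Finset ι → M) :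
    ∑ E ∈ F.powerset, f E
      = f ∅ + ∑ e ∈ F, f {e} + ∑ E ∈ F.powerset.filter (fun E => 2 ≤ E.card), f E := by
  have hsmall : F.powerset.filter (fun E => ¬ 2 ≤ E.card) = insert ∅ (F.powersetCard 1) := by
    ext E
    rcases E.eq_empty_or_nonempty with rfl | hE
    · simp
    · simp only [mem_filter, mem_powerset, mem_insert, mem_powersetCard, hE.ne_empty,
        false_or, not_le]
      exact and_congr_right fun _ => by have := hE.card_pos; omega
  rw [← sum_filter_not_add_sum_filter F.powerset (fun E => 2 ≤ E.card), hsmall,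
    sum_insert (by simp), powersetCard_one, sum_map]
  rfl

lemma pow_sub_mul_div_mul_pow_sub_one {p : ℝ} (hp : p ≠ 0) {k m : ℕ} (hk : 1 ≤ k)
    (hkm : k ≤ m) (a n : ℝ) :
    p ^ (m - k) * a / (n * p ^ (m - 1)) = a / (n * p ^ (k - 1)) := by
  rw [show m - 1 = (m - k) + (k - 1) by omega, pow_add, mul_left_comm n,
    mul_div_mul_left _ _ (pow_ne_zero _ hp)]

lemma eCount_eq_card_edgeFinset {V : Type*} (G : SimpleGraph V) [Fintype G.edgeSet] :
    eCount G = #G.edgeFinset := by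
  rw [eCount, ← SimpleGraph.coe_edgeFinset, Set.ncard_coe_finset]

open Classical in
lemma homDensity_const_add_mul_div {V : Type*} [Fintype V] (G : SimpleGraph V)
    (hG : 1 ≤ eCount G) {p : ℝ} (hp : p ≠ 0) {U : ℝ → ℝ → ℝ}
    (hU : Measurable (Function.uncurry U)) (hsymm : IsSymm2 U) {C : ℝ}
    (hC : ∀ a b, |U a b| ≤ C) (c : ℝ) :
    homDensity G (fun a b => p + c * U a b) / (eCount G * p ^ (eCount G - 1))
      = p / eCount G + c * ∫ q, Function.uncurry U q ∂(unitM.prod unitM)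
        + ∑ E ∈ G.edgeFinset.powerset.filter (fun E => 2 ≤ E.card),
            c ^ E.card * homDensity (SimpleGraph.fromEdgeSet (E : Set (Sym2 V))) U
              / (eCount G * p ^ (E.card - 1)) := by
  have hm := eCount_eq_card_edgeFinset G
  have hcU : ∀ a b, |c * U a b| ≤ |c| * C := fun a b => by
    rw [abs_mul]; exact mul_le_mul_of_nonneg_left (hC a b) (abs_nonneg c)
  rw [homDensity_eq_edgeDensity,
    edgeDensity_const_add (W := fun a b => c * U a b) (hU.const_mul c) hcU, sum_div,
    sum_powerset_eq_empty_add_sum_singleton_add, ← hm]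
  have hm0 : (eCount G : ℝ) ≠ 0 := Nat.cast_ne_zero.2 (by omega)
  congr 1
  congr 1
  · rw [edgeDensity_empty, card_empty, Nat.sub_zero, mul_one,
      ← pow_sub_one_mul (by omega : eCount G ≠ 0)]
    field_simp
  · have hsingle : ∀ e ∈ G.edgeFinset,
        p ^ (eCount G - #{e}) * edgeDensity {e} (fun a b => c * U a b)
            / (eCount G * p ^ (eCount G - 1))
          = c * (∫ q, Function.uncurry U q ∂(unitM.prod unitM)) / eCount G := by
      intro e he
      rw [card_singleton, pow_sub_mul_div_mul_pow_sub_one hp le_rfl (by omega),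
        edgeDensity_const_mul, pow_zero, mul_one, card_singleton, pow_one]
      induction e using Sym2.ind with
      | _ u v => rw [edgeDensity_singleton hU hsymm (G.ne_of_adj (G.mem_edgeFinset.1 he))]
    rw [sum_congr rfl hsingle, sum_const, ← hm, nsmul_eq_mul]
    field_simp
  · refine sum_congr rfl fun E hE => ?_
    obtain ⟨hEG, hE2⟩ := mem_filter.1 hE
    rw [pow_sub_mul_div_mul_pow_sub_one hp (by omega) (hm ▸ card_le_card (mem_powerset.1 hEG)),
      edgeDensity_const_mul, homDensity_fromEdgeSet]
    intro e he
    exact G.not_isDiag_of_mem_edgeSet (G.mem_edgeFinset.1 (mem_powerset.1 hEG he))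

lemma isGraphon_const_add_mul {U : ℝ → ℝ → ℝ} (hU : Measurable (Function.uncurry U))
    (hsymm : IsSymm2 U) {p c : ℝ} (h : ∀ x y, p + c * U x y ∈ Set.Icc (0 : ℝ) 1) :
    IsGraphon (fun a b => p + c * U a b) :=
  ⟨measurable_const.add (hU.const_mul c), fun x y => congrArg (p + c * ·) (hsymm x y), h⟩

lemma IsGraphon.isKernel_sub_const {W : ℝ → ℝ → ℝ} (hW : IsGraphon W) (p : ℝ) :
    IsKernel (fun a b => W a b - p) := by
  obtain ⟨hm, hsymm, hbd⟩ := hW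
  refine ⟨hm.sub measurable_const, fun x y => congrArg (· - p) (hsymm x y), 1 + |p|,
    fun x y => abs_le.2 ⟨?_, ?_⟩⟩ <;>
    linarith [le_abs_self p, neg_abs_le p, (hbd x y).1, (hbd x y).2]

open Classical in
/-- `(H₁,H₂)` is `(p₁,p₂)`-common if and only if, for every kernel `U` with
`-p₁ ≤ U ≤ p₂` pointwise, the expansion expression
`∑_{E⊆E(H₁),|E|≥2} t(H₁[E],U)/(e(H₁)p₁^{|E|-1})
 + ∑_{E⊆E(H₂),|E|≥2} (-1)^{|E|} t(H₂[E],U)/(e(H₂)p₂^{|E|-1})` is non-negative. -/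
theorem commonPair_iff_expansion {V₁ V₂ : Type*} [Fintype V₁] [Fintype V₂]
    (G₁ : SimpleGraph V₁) (G₂ : SimpleGraph V₂)
    (h₁ : 1 ≤ eCount G₁) (h₂ : 1 ≤ eCount G₂)
    (p₁ p₂ : ℝ) (hp₁ : p₁ ∈ Set.Ioo (0:ℝ) 1) (hp₂ : p₂ ∈ Set.Ioo (0:ℝ) 1)
    (hsum : p₁ + p₂ = 1) :
    IsCommonPair G₁ G₂ p₁ p₂ ↔
      ∀ U : ℝ → ℝ → ℝ, IsKernel U → (∀ x y, -p₁ ≤ U x y ∧ U x y ≤ p₂) →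
        0 ≤ (∑ E ∈ G₁.edgeFinset.powerset.filter (fun E => 2 ≤ E.card),
              homDensity (SimpleGraph.fromEdgeSet (E : Set (Sym2 V₁))) U
                / (eCount G₁ * p₁ ^ (E.card - 1)))
          + ∑ E ∈ G₂.edgeFinset.powerset.filter (fun E => 2 ≤ E.card),
              (-1 : ℝ) ^ E.card *
                homDensity (SimpleGraph.fromEdgeSet (E : Set (Sym2 V₂))) U
                  / (eCount G₂ * p₂ ^ (E.card - 1)) := by
  obtain ⟨hp₁0, -⟩ := hp₁
  obtain ⟨hp₂0, -⟩ := hp₂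
  constructor
  · rintro hcommon U ⟨hUm, hUs, C, hC⟩ hbd
    have h := hcommon _ _
      (isGraphon_const_add_mul hUm hUs (p := p₁) (c := 1) fun x y =>
        ⟨by linarith [hbd x y], by linarith [hbd x y]⟩)
      (isGraphon_const_add_mul hUm hUs (p := p₂) (c := -1) fun x y =>
        ⟨by linarith [hbd x y], by linarith [hbd x y]⟩)
      (fun x y => by linarith)
    rw [homDensity_const_add_mul_div G₁ h₁ hp₁0.ne' hUm hUs hC,
      homDensity_const_add_mul_div G₂ h₂ hp₂0.ne' hUm hUs hC] at h
    simp only [one_pow, one_mul] at h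
    linarith
  · intro hexp W₁ W₂ hW₁ hW₂ hW
    have hU := hW₁.isKernel_sub_const p₁
    obtain ⟨C, hC⟩ := hU.2.2
    have e₁ : W₁ = fun a b => p₁ + 1 * (W₁ a b - p₁) := by funext a b; ring
    have e₂ : W₂ = fun a b => p₂ + -1 * (W₁ a b - p₁) := by funext a b; linarith [hW a b]
    have h := hexp _ hU fun x y =>
      ⟨by linarith [(hW₁.2.2 x y).1], by linarith [(hW₁.2.2 x y).2]⟩
    rw [e₁, e₂, homDensity_const_add_mul_div G₁ h₁ hp₁0.ne' hU.1 hU.2.1 hC,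
      homDensity_const_add_mul_div G₂ h₂ hp₂0.ne' hU.1 hU.2.1 hC]
    simp only [one_pow, one_mul] at h ⊢
    linarith
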